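/- arXiv:0801.1867 — 3 statements merged into one kernel-verified Lean document; each statement's English description precedes it below -/
import Mathlib

section
/- Let A and Ã be 2×4 real matrices, each of rank 2, and suppose there is a nonzero real constant c such that for all column indices i < j the minors satisfy A_{ij} = c * Ã_{ij}. Then there exists an invertible 2×2 real matrix S such that A = S * Ã. -/
/-- The 2×2 minor of a 2×4 matrix formed by columns `i` and `j`. -/
def minor (M : Matrix (Fin 2) (Fin 4) ℝ) (i j : Fin 4) : ℝ :=
  M 0 i * M 1 j - M 0 j * M 1 i

/-!
Since `Atilde` has rank 2, some minor `Atilde_{ij}` is nonzero (the Cauchy–Binet identity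
`det (M Mᵀ) = ∑ M_{ij}²`), so columns `i` and `j` of `Atilde` form a basis of `ℝ²`. By Cramer's
rule the coefficients expressing any column in that basis are ratios of minors, and the
proportionality of minors makes them the same for `A` as for `Atilde`. Hence the matrix `S`
sending columns `i, j` of `Atilde` to those of `A` sends every column of `Atilde` to the
corresponding column of `A`, and `det S = A_{ij} / Atilde_{ij} = c`.
-/

open Matrix

theorem Matrix.isUnit_of_rank_eq_card {n K : Type*} [Fintype n] [DecidableEq n] [Field K]
    {A : Matrix n n K} (h : A.rank = Fintype.card n) : IsUnit A := by
  rw [← mulVec_surjective_iff_isUnit, ← coe_mulVecLin, ← LinearMap.range_eq_top]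
  apply Submodule.eq_top_of_finrank_eq
  rw [← Matrix.rank, h, Module.finrank_fintype_fun_eq_card]

section Minor

variable (M : Matrix (Fin 2) (Fin 4) ℝ)

theorem minor_self (i : Fin 4) : minor M i i = 0 := by
  rw [minor]; ring

theorem minor_swap (i j : Fin 4) : minor M j i = -minor M i j := by
  rw [minor, minor]; ring

theorem det_mul_transpose_eq_sum_sq_minor :
    (M * Mᵀ).det = minor M 0 1 ^ 2 + minor M 0 2 ^ 2 + minor M 0 3 ^ 2
      + minor M 1 2 ^ 2 + minor M 1 3 ^ 2 + minor M 2 3 ^ 2 := by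
  simp only [det_fin_two, mul_apply, transpose_apply, Fin.sum_univ_four, minor]
  ring

theorem exists_minor_ne_zero_of_rank_eq_two (hr : M.rank = 2) : ∃ i j, minor M i j ≠ 0 := by
  have hdet : (M * Mᵀ).det ≠ 0 := by
    refine ((isUnit_iff_isUnit_det _).mp (isUnit_of_rank_eq_card ?_)).ne_zero
    rw [rank_self_mul_transpose, hr, Fintype.card_fin]
  by_contra! h
  simp [det_mul_transpose_eq_sum_sq_minor, h] at hdet

theorem det_submatrix_eq_minor (i j : Fin 4) : (M.submatrix id ![i, j]).det = minor M i j := by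
  simp [det_fin_two, minor]

/-- Cramer's rule. -/
theorem minor_smul_column (i j k : Fin 4) :
    minor M i j • Mᵀ k = minor M k j • Mᵀ i + minor M i k • Mᵀ j := by
  ext r; fin_cases r <;> simp [minor] <;> ring

end Minor

theorem row_equiv_of_proportional_minors_general
    (A Atilde : Matrix (Fin 2) (Fin 4) ℝ)
    (hrAt : Atilde.rank = 2)
    (c : ℝ) (hc : c ≠ 0)
    (hminors : ∀ i j : Fin 4, i < j → minor A i j = c * minor Atilde i j) :
    ∃ S : Matrix (Fin 2) (Fin 2) ℝ, IsUnit S ∧ A = S * Atilde := by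
  have hm (i j : Fin 4) : minor A i j = c * minor Atilde i j := by
    rcases lt_trichotomy i j with h | rfl | h
    · exact hminors i j h
    · simp [minor_self]
    · rw [minor_swap, minor_swap Atilde, hminors j i h, mul_neg]
  obtain ⟨i, j, hij⟩ := exists_minor_ne_zero_of_rank_eq_two Atilde hrAt
  have hcol (k : Fin 4) :
      minor Atilde i j • Aᵀ k = minor Atilde k j • Aᵀ i + minor Atilde i k • Aᵀ j := by
    apply smul_right_injective _ hc
    simpa only [smul_add, smul_smul, ← hm] using minor_smul_column A i j k
  set B := Atilde.submatrix id ![i, j]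
  have hB : IsUnit B.det := by rw [det_submatrix_eq_minor]; exact hij.isUnit
  set S := A.submatrix id ![i, j] * B⁻¹
  have hSB : S * B = A.submatrix id ![i, j] := by
    rw [Matrix.mul_assoc, nonsing_inv_mul _ hB, Matrix.mul_one]
  have hSi : S *ᵥ Atildeᵀ i = Aᵀ i := funext fun r => congrFun₂ hSB r 0
  have hSj : S *ᵥ Atildeᵀ j = Aᵀ j := funext fun r => congrFun₂ hSB r 1
  refine ⟨S, ?_, ?_⟩
  · have hdet := congrArg det hSB
    rw [det_mul, det_submatrix_eq_minor, det_submatrix_eq_minor, hm] at hdet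
    rw [isUnit_iff_isUnit_det, mul_right_cancel₀ hij hdet]
    exact hc.isUnit
  · ext r k
    refine congrFun (smul_right_injective (Fin 2 → ℝ) hij ?_ : Aᵀ k = S *ᵥ Atildeᵀ k) r
    calc minor Atilde i j • Aᵀ k
        = minor Atilde k j • Aᵀ i + minor Atilde i k • Aᵀ j := hcol k
      _ = S *ᵥ (minor Atilde k j • Atildeᵀ i + minor Atilde i k • Atildeᵀ j) := by
        rw [mulVec_add, mulVec_smul, mulVec_smul, hSi, hSj]
      _ = minor Atilde i j • S *ᵥ Atildeᵀ k := by rw [← minor_smul_column, mulVec_smul]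

theorem row_equiv_of_proportional_minors
    (A Atilde : Matrix (Fin 2) (Fin 4) ℝ)
    (hrA : A.rank = 2) (hrAt : Atilde.rank = 2)
    (c : ℝ) (hc : c ≠ 0)
    (hminors : ∀ i j : Fin 4, i < j → minor A i j = c * minor Atilde i j) :
    ∃ S : Matrix (Fin 2) (Fin 2) ℝ, IsUnit S ∧ A = S * Atilde :=
  row_equiv_of_proportional_minors_general A Atilde hrAt c hc hminors
end

section
/- (Reconstruction of the boundary-condition matrix from Plücker coordinates.) Let a₁₂, a₁₃, a₁₄, a₂₃, a₂₄, a₃₄ be real numbers with a₁₂ = 0, a₃₄ = 0, a₁₃ = 1, satisfying the Plücker relation a₁₂ * a₃₄ − a₁₃ * a₂₄ + a₁₄ * a₂₃ = 0. Then the 2×4 matrix A = !![1, a₂₃, 0, 0; 0, 0, 1, a₁₄] has 2×2 minors exactly A_{12} = a₁₂ = 0, A_{13} = a₁₃ = 1, A_{14} = a₁₄, A_{23} = a₂₃, A_{24} = a₂₄, A_{34} = a₃₄ = 0. -/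
/-- Reconstruction of the boundary-condition matrix from Plücker coordinates. -/
theorem reconstruction_from_plucker
    (a12 a13 a14 a23 a24 a34 : ℝ)
    (h12 : a12 = 0) (h34 : a34 = 0) (h13 : a13 = 1)
    (hpl : a12 * a34 - a13 * a24 + a14 * a23 = 0) :
    minor !![1, a23, 0, 0; 0, 0, 1, a14] 0 1 = a12 ∧
    minor !![1, a23, 0, 0; 0, 0, 1, a14] 0 2 = a13 ∧
    minor !![1, a23, 0, 0; 0, 0, 1, a14] 0 3 = a14 ∧
    minor !![1, a23, 0, 0; 0, 0, 1, a14] 1 2 = a23 ∧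
    minor !![1, a23, 0, 0; 0, 0, 1, a14] 1 3 = a24 ∧
    minor !![1, a23, 0, 0; 0, 0, 1, a14] 2 3 = a34 := by
  subst h12 h34 h13
  refine ⟨by simp [minor], by simp [minor], by simp [minor], by simp [minor], by simp [minor]; linarith, by simp [minor]⟩
end

section
/- Define the swap map σ : (Fin 6 → ℝ) → (Fin 6 → ℝ) by σ(x₁,x₂,x₃,x₄,x₅,x₆) = (x₂,x₁,x₄,x₃,x₆,x₅), and the dot product ⟨x,y⟩ = Σᵢ xᵢ yᵢ. Let Y ∈ ℝ⁶, set N = ⟨Y,Y⟩, q = ⟨Y, σ Y⟩, and assume 0 < q² < N². Let p = (N − √(N² − q²)) / q and X = (1/(1−p²)) • (Y − p • σ Y). Then Y = X + p • σ X, and X lies on the Plücker quadric: ⟨X, σ X⟩ = 0, i.e. x₁x₂ + x₃x₄ + x₅x₆ = 0 where X = (x₁,…,x₆). -/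
/-- The swap map `σ (x₁,x₂,x₃,x₄,x₅,x₆) = (x₂,x₁,x₄,x₃,x₆,x₅)`. -/
def swap (x : Fin 6 → ℝ) : Fin 6 → ℝ :=
  ![x 1, x 0, x 3, x 2, x 5, x 4]

/-- The dot product on `Fin 6 → ℝ`. -/
def dot (x y : Fin 6 → ℝ) : ℝ := ∑ i, x i * y i

@[simp] lemma swap_apply0 (x : Fin 6 → ℝ) : swap x 0 = x 1 := rfl
@[simp] lemma swap_apply1 (x : Fin 6 → ℝ) : swap x 1 = x 0 := rfl
@[simp] lemma swap_apply2 (x : Fin 6 → ℝ) : swap x 2 = x 3 := rfl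
@[simp] lemma swap_apply3 (x : Fin 6 → ℝ) : swap x 3 = x 2 := rfl
@[simp] lemma swap_apply4 (x : Fin 6 → ℝ) : swap x 4 = x 5 := rfl
@[simp] lemma swap_apply5 (x : Fin 6 → ℝ) : swap x 5 = x 4 := rfl

lemma swap_swap (x : Fin 6 → ℝ) : swap (swap x) = x := by
  funext i; fin_cases i <;> rfl

lemma swap_smul (a : ℝ) (x : Fin 6 → ℝ) : swap (a • x) = a • swap x := by
  funext i; fin_cases i <;> rfl

lemma swap_sub (x y : Fin 6 → ℝ) : swap (x - y) = swap x - swap y := by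
  funext i; fin_cases i <;> rfl

set_option maxHeartbeats 1600000 in
/-- Correctness of the orthogonal-projection construction onto the Plücker quadric. -/
theorem orthogonal_projection_onto_plucker_quadric
    (Y : Fin 6 → ℝ)
    (N q : ℝ) (hN : N = dot Y Y) (hq : q = dot Y (swap Y))
    (hq0 : 0 < q ^ 2) (hqN : q ^ 2 < N ^ 2)
    (p : ℝ) (hp : p = (N - Real.sqrt (N ^ 2 - q ^ 2)) / q)
    (X : Fin 6 → ℝ) (hX : X = (1 / (1 - p ^ 2)) • (Y - p • swap Y)) :
    Y = X + p • swap X ∧ dot X (swap X) = 0 ∧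
      X 0 * X 1 + X 2 * X 3 + X 4 * X 5 = 0 := by
  have hqne : q ≠ 0 := by
    intro h; rw [h] at hq0; simp at hq0
  set s := Real.sqrt (N ^ 2 - q ^ 2) with hs
  have hs2 : s ^ 2 = N ^ 2 - q ^ 2 := Real.sq_sqrt (by linarith)
  have hsnn : 0 ≤ s := Real.sqrt_nonneg _
  have hNnn : 0 ≤ N := by
    rw [hN, dot]
    exact Finset.sum_nonneg fun i _ => mul_self_nonneg _
  have hNpos : 0 < N := by nlinarith
  have hsN : s < N := by nlinarith
  have hspos : 0 < s := by nlinarith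
  have hpq : p * q = N - s := by
    rw [hp]; field_simp
  have hquad : q * p ^ 2 - 2 * N * p + q = 0 := by
    have h : q * (q * p ^ 2 - 2 * N * p + q) = 0 := by
      linear_combination (p * q - N - s) * hpq + hs2
    rcases mul_eq_zero.mp h with h | h
    · exact absurd h hqne
    · exact h
  have hpne : p ≠ 0 := by
    intro h
    rw [h, zero_mul] at hpq
    nlinarith
  have h1 : q * (1 - p ^ 2) = 2 * (q - N * p) := by linear_combination -hquad
  have h2 : q * (q - N * p) = q * (s * p) := by
    linear_combination (-(N + s)) * hpq + hs2
  have h3 : q - N * p = s * p := mul_left_cancel₀ hqne h2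
  have h1p : (1 : ℝ) - p ^ 2 ≠ 0 := by
    intro h
    rw [h, mul_zero] at h1
    rw [h3] at h1
    have : s * p = 0 := by linarith
    rcases mul_eq_zero.mp this with h' | h'
    · exact absurd h' (ne_of_gt hspos)
    · exact hpne h'
  have hkey : (1 - p ^ 2) ^ 2 * dot X (swap X) = q * (1 + p ^ 2) - 2 * p * N := by
    subst hN hq
    simp only [dot, Fin.sum_univ_six, swap_apply0, swap_apply1, swap_apply2, swap_apply3,
      swap_apply4, swap_apply5, hX, Pi.smul_apply, Pi.sub_apply, smul_eq_mul]
    field_simp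
    ring
  have hdot : dot X (swap X) = 0 := by
    have hz : q * (1 + p ^ 2) - 2 * p * N = 0 := by linear_combination hquad
    have := hkey
    rw [hz] at this
    exact (mul_eq_zero.mp this).resolve_left (pow_ne_zero 2 h1p)
  refine ⟨?_, hdot, ?_⟩
  · rw [hX, swap_smul, swap_sub, swap_smul, swap_swap]
    match_scalars <;> (field_simp; try ring)
  · have : dot X (swap X) = 2 * (X 0 * X 1 + X 2 * X 3 + X 4 * X 5) := by
      simp only [dot, Fin.sum_univ_six, swap_apply0, swap_apply1, swap_apply2, swap_apply3,
        swap_apply4, swap_apply5]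
      ring
    rw [hdot] at this
    linarith
end
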